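/- Let K be a compact subset of the unit disk D and let K* = { |z| : z ∈ K }. Then V(K) ≤ V(K*); equivalently, the Green capacity in D satisfies capa(K*) ≤ capa(K). -/

import Mathlib

open MeasureTheory Set Filter
open scoped ENNReal NNReal

noncomputable section

/-- The open unit disk in the complex plane. -/
def unitDisk : Set ℂ := {z : ℂ | ‖z‖ < 1}

/-- The Green function of the unit disk, `g(z,w) = log |(1 - w̄ z)/(z - w)|`,
with value `⊤` on the diagonal. -/
def greenFnE (z w : ℂ) : ℝ≥0∞ :=
  if z = w then ⊤ else ENNReal.ofReal (Real.log ‖(1 - (starRingEnd ℂ) w * z) / (z - w)‖)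

/-- The Green energy `I(μ) = ∬ g(z,w) dμ(z) dμ(w)` of a measure. -/
def greenEnergy (μ : Measure ℂ) : ℝ≥0∞ := ∫⁻ z, ∫⁻ w, greenFnE z w ∂μ ∂μ

/-- `greenV E = V(E)`: the infimum of energies of probability measures supported by a
compact subset of `E`. -/
def greenV (E : Set ℂ) : ℝ≥0∞ :=
  ⨅ (μ : Measure ℂ) (_ : IsProbabilityMeasure μ)
    (_ : ∃ K : Set ℂ, K ⊆ E ∧ IsCompact K ∧ μ Kᶜ = 0), greenEnergy μ

/-- The Green capacity `capa(E) = 1/V(E)` of `E` in the unit disk. -/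
def greenCapa (E : Set ℂ) : ℝ≥0∞ := (greenV E)⁻¹

/-- `e^{-1/capa(E)} = e^{-V(E)}`, with the value `0` when `V(E) = ∞` (i.e. `capa(E) = 0`). -/
def expNegV (E : Set ℂ) : ℝ :=
  if greenV E = ⊤ then 0 else Real.exp (-(greenV E).toReal)

/-- The pseudo-hyperbolic distance on the unit disk. -/
def pseudoDist (z w : ℂ) : ℝ := ‖(z - w) / (1 - (starRingEnd ℂ) z * w)‖

/-- The pseudo-hyperbolic diameter of a set. -/
def pseudoDiam (E : Set ℂ) : ℝ :=
  sSup {d : ℝ | ∃ z ∈ E, ∃ w ∈ E, d = pseudoDist z w}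

/-- The `n`-th approximation number `a_n(T) = inf {‖T - R‖ : rank R < n}`. -/
def approxNumber {E F : Type*} [NormedAddCommGroup E] [NormedAddCommGroup F]
    [NormedSpace ℂ E] [NormedSpace ℂ F] (T : E →L[ℂ] F) (n : ℕ) : ℝ :=
  sInf {c : ℝ | ∃ R : E →L[ℂ] F,
    Module.rank ℂ (LinearMap.range (R : E →ₗ[ℂ] F)) < (n : Cardinal) ∧ c = ‖T - R‖}

/-- The squared norm `‖f‖² = |f(0)|² + ∫_D |f'|² ω dA` (normalized area measure) of the
weighted analytic Hilbert space `H_ω`. -/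
def hwNormSq (ω : ℝ → ℝ) (f : ℂ → ℂ) : ℝ :=
  ‖f 0‖ ^ 2 + (∫ z in unitDisk, ‖deriv f z‖ ^ 2 * ω ‖z‖) / Real.pi

/-- Membership in the weighted analytic Hilbert space `H_ω`. -/
def memHw (ω : ℝ → ℝ) (f : ℂ → ℂ) : Prop :=
  DifferentiableOn ℂ f unitDisk ∧
    IntegrableOn (fun z => ‖deriv f z‖ ^ 2 * ω ‖z‖) unitDisk

/-- The coefficient weights `w_0 = 1`, `w_n = 2 n² ∫_0^1 r^{2n-1} ω(r) dr`. -/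
def wcoef (ω : ℝ → ℝ) (n : ℕ) : ℝ :=
  if n = 0 then 1 else 2 * (n : ℝ) ^ 2 * ∫ r in (0:ℝ)..1, r ^ (2 * n - 1) * ω r

/-- Taylor coefficient of `f` at `0`. -/
def taylorCoeff (f : ℂ → ℂ) (n : ℕ) : ℂ := iteratedDeriv n f 0 / (n.factorial : ℂ)

/-- `(1/2π) ∫_0^{2π} |f(r e^{it})|^p dt`. -/
def hpMean (p : ℝ) (f : ℂ → ℂ) (r : ℝ) : ℝ :=
  (1 / (2 * Real.pi)) *
    ∫ t in (0:ℝ)..(2 * Real.pi), ‖f ((r : ℂ) * Complex.exp ((t : ℂ) * Complex.I))‖ ^ p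

/-- The `H^p` norm. -/
def hpNorm (p : ℝ) (f : ℂ → ℂ) : ℝ :=
  sSup {m : ℝ | ∃ r ∈ Set.Ioo (0:ℝ) 1, m = hpMean p f r ^ (1 / p)}

/-- Membership in the Hardy space `H^p`. -/
def memHp (p : ℝ) (f : ℂ → ℂ) : Prop :=
  DifferentiableOn ℂ f unitDisk ∧
    BddAbove {m : ℝ | ∃ r ∈ Set.Ioo (0:ℝ) 1, m = hpMean p f r ^ (1 / p)}

/-- The squared `H²` norm `‖f‖² = Σ |b_n|²` in terms of Taylor coefficients. -/
def h2NormSq (f : ℂ → ℂ) : ℝ := ∑' n : ℕ, ‖taylorCoeff f n‖ ^ 2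

/-- Membership in the Hardy space `H²`. -/
def memH2 (f : ℂ → ℂ) : Prop :=
  DifferentiableOn ℂ f unitDisk ∧ Summable (fun n : ℕ => ‖taylorCoeff f n‖ ^ 2)

/-- The `n`-th Kolmogorov number. -/
def kolmogorovNumber {E F : Type*} [NormedAddCommGroup E] [NormedAddCommGroup F]
    [NormedSpace ℂ E] [NormedSpace ℂ F] (T : E →L[ℂ] F) (n : ℕ) : ℝ :=
  ⨅ (S : Submodule ℂ F) (_ : Module.rank ℂ S < (n : Cardinal)),
    ⨆ x : {x : E // ‖x‖ ≤ 1}, Metric.infDist (T (x : E)) (S : Set F)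

/-- The `n`-th Gelfand number: infimum of norms of restrictions of `T` to closed
subspaces of codimension `< n`. -/
def gelfandNumber {X : Type*} [NormedAddCommGroup X] [NormedSpace ℂ X]
    (T : X →L[ℂ] X) (n : ℕ) : ℝ :=
  ⨅ (F : Submodule ℂ X) (_ : IsClosed (F : Set X))
    (_ : Module.rank ℂ (X ⧸ F) < (n : Cardinal)),
    ⨆ x : {x : X // x ∈ F ∧ ‖x‖ ≤ 1}, ‖T (x : X)‖

/-- `ε_n(T) = inf_{dim E < n} sup_{x ∈ B_X} dist (T x, T(E))`. -/
def epsApprox {X : Type*} [NormedAddCommGroup X] [NormedSpace ℂ X]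
    (T : X →L[ℂ] X) (n : ℕ) : ℝ :=
  ⨅ (E : Submodule ℂ X) (_ : Module.rank ℂ E < (n : Cardinal)),
    ⨆ x : {x : X // ‖x‖ ≤ 1}, Metric.infDist (T (x : X)) (T '' (E : Set X))

/-!
The map `z ↦ |z|` does not increase the pseudo-hyperbolic distance: from
`|1 - z̄w|² - |z - w|² = (1 - |z|²)(1 - |w|²)` and `|1 - z̄w| ≥ 1 - |z||w|` one gets
`ρ(|z|, |w|) ≤ ρ(z, w)`, i.e. `g(z, w) ≤ g(|z|, |w|)`. A probability measure `μ` on `K*` lifts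
to `K` through a measurable section `φ(r) = r e^{iθ(r)}` of `z ↦ |z|`, where `θ(r)` is the least
angle in `[-π, π]` with `r e^{iθ} ∈ K`; the lift `φ_* μ` has energy at most `I(μ)`.
-/

open ComplexConjugate

theorem norm_one_sub_conj_mul_sq_sub_norm_sub_sq (z w : ℂ) :
    ‖1 - conj z * w‖ ^ 2 - ‖z - w‖ ^ 2 = (1 - ‖z‖ ^ 2) * (1 - ‖w‖ ^ 2) := by
  apply Complex.ofReal_injective
  push_cast
  simp only [← Complex.mul_conj', map_sub, map_mul, map_one, Complex.conj_conj]
  ring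

theorem pseudoDist_pos {z w : ℂ} (h : z ≠ w) (hz : ‖z‖ < 1) (hw : ‖w‖ < 1) :
    0 < pseudoDist z w := by
  have hden : 1 - conj z * w ≠ 0 := by
    refine sub_ne_zero.2 fun h1 => ?_
    have := congrArg norm h1
    rw [norm_one, norm_mul, Complex.norm_conj] at this
    nlinarith [norm_nonneg z, norm_nonneg w]
  exact norm_pos_iff.2 (div_ne_zero (sub_ne_zero.2 h) hden)

theorem pseudoDist_norm_le_pseudoDist {z w : ℂ} (hz : ‖z‖ < 1) (hw : ‖w‖ < 1) :
    pseudoDist ‖z‖ ‖w‖ ≤ pseudoDist z w := by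
  have hzw : ‖z‖ * ‖w‖ < 1 := by nlinarith [norm_nonneg z, norm_nonneg w]
  have hP : 0 ≤ (1 - ‖z‖ ^ 2) * (1 - ‖w‖ ^ 2) :=
    mul_nonneg (by nlinarith [norm_nonneg z]) (by nlinarith [norm_nonneg w])
  have hcplx := norm_one_sub_conj_mul_sq_sub_norm_sub_sq z w
  have hreal := norm_one_sub_conj_mul_sq_sub_norm_sub_sq (‖z‖ : ℂ) (‖w‖ : ℂ)
  have hden_real : ‖1 - conj (‖z‖ : ℂ) * ‖w‖‖ = 1 - ‖z‖ * ‖w‖ := by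
    rw [Complex.conj_ofReal, ← Complex.ofReal_mul, ← Complex.ofReal_one, ← Complex.ofReal_sub,
      Complex.norm_real, Real.norm_of_nonneg (by linarith)]
  have hden : 1 - ‖z‖ * ‖w‖ ≤ ‖1 - conj z * w‖ := by
    simpa using norm_sub_norm_le (1 : ℂ) (conj z * w)
  simp only [Complex.norm_real, norm_norm, hden_real] at hreal
  unfold pseudoDist
  rw [norm_div, norm_div, hden_real, div_le_div_iff₀ (by linarith) (by linarith),
    ← pow_le_pow_iff_left₀ (by positivity) (by positivity) two_ne_zero]
  nlinarith [mul_le_mul_of_nonneg_left (pow_le_pow_left₀ (by linarith) hden 2) hP]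

theorem greenFnE_eq_ofReal_neg_log_pseudoDist {z w : ℂ} (h : z ≠ w) :
    greenFnE z w = ENNReal.ofReal (-Real.log (pseudoDist z w)) := by
  have hconj : ‖1 - conj w * z‖ = ‖1 - conj z * w‖ := by
    rw [← Complex.norm_conj]; simp [mul_comm]
  rw [greenFnE, if_neg h, ← Real.log_inv, pseudoDist, ← norm_inv, inv_div, norm_div, norm_div,
    hconj]

theorem greenFnE_le_greenFnE_norm {z w : ℂ} (hz : ‖z‖ < 1) (hw : ‖w‖ < 1) :
    greenFnE z w ≤ greenFnE ‖z‖ ‖w‖ := by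
  by_cases h : (‖z‖ : ℂ) = ‖w‖
  · simp [greenFnE, h]
  have hzw : z ≠ w := by rintro rfl; exact h rfl
  rw [greenFnE_eq_ofReal_neg_log_pseudoDist hzw, greenFnE_eq_ofReal_neg_log_pseudoDist h]
  exact ENNReal.ofReal_le_ofReal <| neg_le_neg <|
    Real.log_le_log (pseudoDist_pos h (by simpa) (by simpa)) (pseudoDist_norm_le_pseudoDist hz hw)

theorem measurable_greenFnE : Measurable (Function.uncurry greenFnE) :=
  Measurable.ite (measurableSet_eq_fun measurable_fst measurable_snd) measurable_const
    (by fun_prop)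

theorem isClosed_setOf_exists_mem_of_isCompact {X Y : Type*} [TopologicalSpace X]
    [TopologicalSpace Y] {T : Set Y} (hT : IsCompact T) {F : Set (X × Y)} (hF : IsClosed F) :
    IsClosed {x | ∃ t ∈ T, (x, t) ∈ F} := by
  have := isCompact_iff_compactSpace.mp hT
  have hproj : {x | ∃ t ∈ T, (x, t) ∈ F} =
      Prod.fst '' ((fun p : X × T => (p.1, (p.2 : Y))) ⁻¹' F) := by
    ext x
    simp
  rw [hproj]
  exact isClosedMap_fst_of_compactSpace _ (hF.preimage (by fun_prop))

theorem isCompact_Icc_sep_fiber {X : Type*} [TopologicalSpace X] {F : Set (X × ℝ)}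
    (hF : IsClosed F) (a b : ℝ) (x : X) : IsCompact {t ∈ Icc a b | (x, t) ∈ F} :=
  isCompact_Icc.inter_right (hF.preimage (Continuous.prodMk_right x))

theorem measurable_sInf_fiber {X : Type*} [TopologicalSpace X] [MeasurableSpace X]
    [OpensMeasurableSpace X] {F : Set (X × ℝ)} (hF : IsClosed F) (a b : ℝ) :
    Measurable fun x => sInf {t ∈ Icc a b | (x, t) ∈ F} := by
  set S : X → Set ℝ := fun x => {t ∈ Icc a b | (x, t) ∈ F}
  have hS : ∀ x, IsCompact (S x) := isCompact_Icc_sep_fiber hF a b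
  refine measurable_of_Iic fun c => ?_
  -- the second piece comes from the junk value `sInf ∅ = 0`
  have hpre : (fun x => sInf (S x)) ⁻¹' Iic c =
      {x | ∃ t ∈ Icc a b ∩ Iic c, (x, t) ∈ F} ∪
        ({x | ∃ t ∈ Icc a b, (x, t) ∈ F}ᶜ ∩ {_x | 0 ≤ c}) := by
    ext x
    rcases (S x).eq_empty_or_nonempty with hempty | hne
    · have hno : ¬∃ t ∈ Icc a b, (x, t) ∈ F := fun ⟨t, ht, htF⟩ => hempty.subset ⟨ht, htF⟩
      change sInf (S x) ≤ c ↔ _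
      rw [hempty, Real.sInf_empty]
      refine ⟨fun hc => Or.inr ⟨hno, hc⟩, ?_⟩
      rintro (⟨t, ht, htF⟩ | ⟨-, hc⟩)
      exacts [absurd ⟨t, ht.1, htF⟩ hno, hc]
    · constructor
      · intro hx
        exact Or.inl ⟨_, ⟨((hS x).sInf_mem hne).1, hx⟩, ((hS x).sInf_mem hne).2⟩
      · rintro (⟨t, ⟨hab, htc⟩, htF⟩ | ⟨hno, -⟩)
        · exact (csInf_le (hS x).bddBelow ⟨hab, htF⟩).trans htc
        · obtain ⟨t, ht, htF⟩ := hne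
          exact absurd ⟨t, ht, htF⟩ hno
  rw [hpre]
  exact (isClosed_setOf_exists_mem_of_isCompact (isCompact_Icc.inter_right isClosed_Iic)
    hF).measurableSet.union ((isClosed_setOf_exists_mem_of_isCompact isCompact_Icc
    hF).measurableSet.compl.inter (MeasurableSet.const _))

theorem exists_measurable_rightInvOn_norm {K : Set ℂ} (hK : IsClosed K) :
    ∃ φ : ℂ → ℂ, Measurable φ ∧ MapsTo φ ((fun z : ℂ => (‖z‖ : ℂ)) '' K) K ∧
      RightInvOn φ (fun z : ℂ => (‖z‖ : ℂ)) ((fun z : ℂ => (‖z‖ : ℂ)) '' K) := by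
  set F : Set (ℝ × ℝ) := {p | (p.1 : ℂ) * Complex.exp (p.2 * Complex.I) ∈ K}
  have hF : IsClosed F := hK.preimage (by fun_prop)
  set θ : ℝ → ℝ := fun r => sInf {t ∈ Icc (-Real.pi) Real.pi | (r, t) ∈ F}
  have hθ : Measurable θ := measurable_sInf_fiber hF _ _
  refine ⟨fun w => w.re * Complex.exp (θ w.re * Complex.I), by fun_prop, ?_⟩
  suffices h : ∀ z ∈ K, (‖z‖ : ℂ) * Complex.exp (θ ‖z‖ * Complex.I) ∈ K by
    refine ⟨?_, ?_⟩ <;> rintro _ ⟨z, hz, rfl⟩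
    · simpa using h z hz
    · simp [Complex.norm_exp_ofReal_mul_I]
  intro z hz
  have harg : Complex.arg z ∈ {t ∈ Icc (-Real.pi) Real.pi | (‖z‖, t) ∈ F} :=
    ⟨⟨(Complex.neg_pi_lt_arg z).le, Complex.arg_le_pi z⟩,
      by simpa [F, Complex.norm_mul_exp_arg_mul_I] using hz⟩
  exact ((isCompact_Icc_sep_fiber hF _ _ _).sInf_mem ⟨_, harg⟩).2

theorem greenEnergy_map {φ : ℂ → ℂ} (hφ : Measurable φ) (μ : Measure ℂ) [SFinite μ] :
    greenEnergy (μ.map φ) = ∫⁻ z, ∫⁻ w, greenFnE (φ z) (φ w) ∂μ ∂μ := by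
  rw [greenEnergy, lintegral_map (measurable_greenFnE.lintegral_prod_right) hφ]
  congr 1 with z
  exact lintegral_map (measurable_greenFnE.comp measurable_prodMk_left) hφ

theorem greenV_le_greenEnergy {E K : Set ℂ} (hKE : K ⊆ E) (hK : IsCompact K) (μ : Measure ℂ)
    [IsProbabilityMeasure μ] (hμ : μ Kᶜ = 0) : greenV E ≤ greenEnergy μ :=
  iInf_le_of_le μ <| iInf_le_of_le ‹_› <| iInf_le _ ⟨K, hKE, hK, hμ⟩

/-- For `K` compact in the unit disk and `K* = {|z| : z ∈ K}`, one has
`V(K) ≤ V(K*)`, equivalently `capa(K*) ≤ capa(K)`. -/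
theorem greenV_le_greenV_abs_image
    (K : Set ℂ) (hK : IsCompact K) (hKD : K ⊆ unitDisk) :
    greenV K ≤ greenV ((fun z : ℂ => (‖z‖ : ℂ)) '' K) ∧
      greenCapa ((fun z : ℂ => (‖z‖ : ℂ)) '' K) ≤ greenCapa K := by
  have hV : greenV K ≤ greenV ((fun z : ℂ => (‖z‖ : ℂ)) '' K) := by
    refine le_iInf fun μ => le_iInf fun _ => le_iInf fun ⟨C, hCK, _, hμC⟩ => ?_
    obtain ⟨φ, hφ, hmaps, hinv⟩ := exists_measurable_rightInvOn_norm hK.isClosed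
    have := Measure.isProbabilityMeasure_map (μ := μ) hφ.aemeasurable
    have hνK : μ.map φ Kᶜ = 0 := by
      rw [Measure.map_apply hφ hK.isClosed.measurableSet.compl]
      exact measure_mono_null (fun r hr hrC => hr (hmaps (hCK hrC))) hμC
    have hC : ∀ᵐ r ∂μ, r ∈ C := mem_ae_iff.mpr hμC
    have hle : ∀ r ∈ C, ∀ s ∈ C, greenFnE (φ r) (φ s) ≤ greenFnE r s := fun r hr s hs =>
      calc greenFnE (φ r) (φ s) ≤ greenFnE ‖φ r‖ ‖φ s‖ :=
            greenFnE_le_greenFnE_norm (hKD (hmaps (hCK hr))) (hKD (hmaps (hCK hs)))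
        _ = greenFnE r s := congrArg₂ greenFnE (hinv (hCK hr)) (hinv (hCK hs))
    calc greenV K ≤ greenEnergy (μ.map φ) := greenV_le_greenEnergy subset_rfl hK _ hνK
      _ = ∫⁻ r, ∫⁻ s, greenFnE (φ r) (φ s) ∂μ ∂μ := greenEnergy_map hφ μ
      _ ≤ greenEnergy μ := lintegral_mono_ae <| hC.mono fun r hr =>
            lintegral_mono_ae <| hC.mono fun s hs => hle r hr s hs
  exact ⟨hV, ENNReal.inv_le_inv.mpr hV⟩

end
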